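/- Let E be a strongly archimedean convex SEA with property A and let S⊆E. If (a_n) is a sequence of mutually commuting elements of the commutant S' that converges in norm to a∈E, then a∈S'. -/

import Mathlib

universe u

/-- An effect algebra: the partially defined sum `⊕` is encoded via `Option`. -/
class EffectAlgebra (E : Type u) where
  oplus : E → E → Option E
  zero : E
  one : E
  oplus_comm : ∀ a b : E, oplus a b = oplus b a
  oplus_assoc : ∀ {a b c ab abc : E}, oplus a b = some ab → oplus ab c = some abc →
    ∃ bc : E, oplus b c = some bc ∧ oplus a bc = some abc
  exists_perp : ∀ a : E, ∃ b : E, oplus a b = some one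
  perp_unique : ∀ {a b c : E}, oplus a b = some one → oplus a c = some one → b = c
  oplus_one : ∀ {a b : E}, oplus a one = some b → a = zero

namespace EffectAlgebra

variable {E : Type u} [EffectAlgebra E]

/-- The orthosupplement `a^⊥`. -/
noncomputable def perp (a : E) : E := Classical.choose (exists_perp a)

/-- The partial order: `a ≤ b` iff `a ⊕ c = b` for some `c`. -/
def le (a b : E) : Prop := ∃ c : E, oplus a c = some b

/-- Sharp elements. -/
def Sharp (a : E) : Prop := ∀ x : E, le x a → le x (perp a) → x = zero

/-- Finite orthosums of lists of elements. -/
def osum : List E → Option E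
  | [] => some zero
  | a :: l => (osum l).bind fun s => oplus a s

/-- Mackey compatibility `a ↔ b`. -/
def MCompat (a b : E) : Prop :=
  ∃ a₁ b₁ c s t : E, oplus a₁ b₁ = some s ∧ oplus s c = some t ∧
    oplus a₁ c = some a ∧ oplus b₁ c = some b

/-- `a` is the supremum of the sequence `f`. -/
def IsSupSeq (f : ℕ → E) (a : E) : Prop :=
  (∀ n, le (f n) a) ∧ ∀ b : E, (∀ n, le (f n) b) → le a b

/-- `a` is the infimum of the sequence `f`. -/
def IsInfSeq (f : ℕ → E) (a : E) : Prop :=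
  (∀ n, le a (f n)) ∧ ∀ b : E, (∀ n, le b (f n)) → le b a

/-- `a` is the infimum of the set `S`. -/
def IsInfSet (S : Set E) (a : E) : Prop :=
  (∀ x ∈ S, le a x) ∧ ∀ b : E, (∀ x ∈ S, le b x) → le b a

/-- `a` is the supremum of `f` computed inside the subset `S`. -/
def IsSupSeqIn (S : Set E) (f : ℕ → E) (a : E) : Prop :=
  a ∈ S ∧ (∀ n, le (f n) a) ∧ ∀ b ∈ S, (∀ n, le (f n) b) → le a b

variable (E) in
/-- Monotone σ-completeness: every ascending sequence has a supremum. -/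
def MonotoneSigmaComplete : Prop :=
  ∀ f : ℕ → E, (∀ n, le (f n) (f (n + 1))) → ∃ a : E, IsSupSeq f a

end EffectAlgebra

open EffectAlgebra in
/-- A compression base `(J_p)_{p ∈ P}` on an effect algebra. -/
structure CompressionBase (E : Type u) [EffectAlgebra E] where
  P : Set E
  J : E → E → E
  zero_mem : zero ∈ P
  one_mem : one ∈ P
  perp_mem : ∀ p ∈ P, perp p ∈ P
  oplus_mem : ∀ p ∈ P, ∀ q ∈ P, ∀ r : E, oplus p q = some r → r ∈ P
  normal : ∀ e f d s t x y : E, oplus e f = some s → oplus s d = some t →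
    oplus e d = some x → x ∈ P → oplus f d = some y → y ∈ P → d ∈ P
  additive : ∀ p ∈ P, ∀ a b c : E, oplus a b = some c →
    oplus (J p a) (J p b) = some (J p c)
  retraction : ∀ p ∈ P, ∀ a : E, le a p → J p a = a
  focus : ∀ p ∈ P, J p one = p
  compression : ∀ p ∈ P, ∀ a : E, (J p a = zero ↔ le a (perp p))
  compose : ∀ p ∈ P, ∀ q ∈ P, ∀ r ∈ P, ∀ s t qr : E,
    oplus p q = some s → oplus s r = some t → oplus q r = some qr →
    ∀ a : E, J s (J qr a) = J q a

namespace CompressionBase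

open EffectAlgebra

variable {E : Type u} [EffectAlgebra E] (cb : CompressionBase E)

/-- The commutant `C(p)` of a projection `p`. -/
noncomputable def Cset (p : E) : Set E :=
  {a : E | oplus (cb.J p a) (cb.J (perp p) a) = some a}

/-- `PC(a)`: projections compatible with `a`. -/
noncomputable def PC (a : E) : Set E := {p : E | p ∈ cb.P ∧ a ∈ cb.Cset p}

/-- The P-bicommutant `P(a) = PC(PC(a) ∪ {a})`. -/
noncomputable def Pbicomm (a : E) : Set E :=
  {p : E | p ∈ cb.P ∧ a ∈ cb.Cset p ∧ ∀ q ∈ cb.PC a, q ∈ cb.Cset p}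

/-- `p` is the projection cover of `a`. -/
def IsProjCover (a p : E) : Prop :=
  p ∈ cb.P ∧ ∀ q ∈ cb.P, (le a q ↔ le p q)

/-- The projection cover property. -/
def ProjCoverProp : Prop := ∀ a : E, ∃ p : E, cb.IsProjCover a p

/-- `B` is a Boolean subalgebra of the set of projections. -/
noncomputable def BooleanSub (B : Set E) : Prop :=
  B ⊆ cb.P ∧ zero ∈ B ∧ one ∈ B ∧ (∀ p ∈ B, perp p ∈ B) ∧
  (∀ p ∈ B, ∀ q ∈ B, MCompat p q) ∧
  (∀ p ∈ B, ∀ q ∈ B, ∀ r : E, oplus p q = some r → r ∈ B)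

/-- The b-property. -/
noncomputable def BProperty : Prop :=
  ∀ a : E, ∃ B : Set E, cb.BooleanSub B ∧
    ∀ p ∈ cb.P, (a ∈ cb.Cset p ↔ ∀ b ∈ B, b ∈ cb.Cset p)

/-- Commutativity `aCb` of b-elements. -/
noncomputable def CommuteC (a b : E) : Prop :=
  ∀ p ∈ cb.Pbicomm a, ∀ q ∈ cb.Pbicomm b, MCompat p q

/-- The b-comparability property. -/
noncomputable def BComparability : Prop :=
  cb.BProperty ∧
  ∀ e f : E, cb.CommuteC e f → ∃ p : E, p ∈ cb.Pbicomm e ∧ p ∈ cb.Pbicomm f ∧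
    le (cb.J p e) (cb.J p f) ∧ le (cb.J (perp p) f) (cb.J (perp p) e)

/-- Spectrality: projection cover property plus b-comparability. -/
noncomputable def Spectral : Prop := cb.ProjCoverProp ∧ cb.BComparability

/-- `p` is the floor of `a` (the largest projection below `a`). -/
def IsFloor (a p : E) : Prop :=
  p ∈ cb.P ∧ le p a ∧ ∀ q ∈ cb.P, le q a → le q p

end CompressionBase

open EffectAlgebra in
/-- A sequential effect algebra (SEA). -/
class SEA (E : Type u) [EffectAlgebra E] where
  seq : E → E → E
  seq_oplus : ∀ a b c d : E, oplus b c = some d →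
    oplus (seq a b) (seq a c) = some (seq a d)
  one_seq : ∀ a : E, seq one a = a
  seq_zero_symm : ∀ a b : E, seq a b = zero → seq b a = zero
  comm_perp : ∀ a b : E, seq a b = seq b a → seq a (perp b) = seq (perp b) a
  comm_assoc : ∀ a b c : E, seq a b = seq b a → seq a (seq b c) = seq (seq a b) c
  comm_seq : ∀ a b c : E, seq c a = seq a c → seq c b = seq b c →
    seq c (seq a b) = seq (seq a b) c
  comm_oplus : ∀ a b c d : E, seq c a = seq a c → seq c b = seq b c →
    oplus a b = some d → seq c d = seq d c

namespace EffectAlgebra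

variable {E : Type u} [EffectAlgebra E]

section SEAdefs

variable [SEA E]

/-- `a | b` : the sequential product commutes. -/
def Commutes (a b : E) : Prop := SEA.seq a b = SEA.seq b a

/-- The commutant `S'` of a subset. -/
def commutant (S : Set E) : Set E := {a : E | ∀ s ∈ S, Commutes a s}

/-- The bicommutant `S''`. -/
def bicommutant (S : Set E) : Set E := commutant (commutant S)

/-- A sub-SEA: a sub-effect algebra closed under the sequential product. -/
noncomputable def SubSEA (S : Set E) : Prop :=
  zero ∈ S ∧ one ∈ S ∧ (∀ a ∈ S, perp a ∈ S) ∧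
  (∀ a ∈ S, ∀ b ∈ S, ∀ c : E, oplus a b = some c → c ∈ S) ∧
  (∀ a ∈ S, ∀ b ∈ S, SEA.seq a b ∈ S)

/-- A commutative sub-SEA. -/
noncomputable def CommSubSEA (S : Set E) : Prop :=
  SubSEA S ∧ ∀ a ∈ S, ∀ b ∈ S, Commutes a b

/-- A maximal commutative sub-SEA. -/
noncomputable def MaxCommSubSEA (S : Set E) : Prop :=
  CommSubSEA S ∧ ∀ T : Set E, CommSubSEA T → S ⊆ T → T = S

/-- `C(p)` for the canonical compression base `J_p = p ∘ ·` of a SEA. -/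
noncomputable def sC (p : E) : Set E :=
  {a : E | oplus (SEA.seq p a) (SEA.seq (perp p) a) = some a}

/-- `PC(a)` for the canonical compression base. -/
noncomputable def sPC (a : E) : Set E := {p : E | Sharp p ∧ a ∈ sC p}

/-- The P-bicommutant `P(a)` for the canonical compression base. -/
noncomputable def sPbicomm (a : E) : Set E :=
  {p : E | Sharp p ∧ a ∈ sC p ∧ ∀ q ∈ sPC a, q ∈ sC p}

/-- `p` is the projection cover of `a` (canonical compression base). -/
noncomputable def sIsProjCover (a p : E) : Prop :=
  Sharp p ∧ ∀ q : E, Sharp q → (le a q ↔ le p q)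

variable (E) in
/-- The projection cover property (canonical compression base). -/
noncomputable def sProjCoverProp : Prop := ∀ a : E, ∃ p : E, sIsProjCover a p

/-- `B` is a Boolean subalgebra of the sharp elements. -/
noncomputable def sBooleanSub (B : Set E) : Prop :=
  (∀ p ∈ B, Sharp p) ∧ zero ∈ B ∧ one ∈ B ∧ (∀ p ∈ B, perp p ∈ B) ∧
  (∀ p ∈ B, ∀ q ∈ B, MCompat p q) ∧
  (∀ p ∈ B, ∀ q ∈ B, ∀ r : E, oplus p q = some r → r ∈ B)

variable (E) in
/-- The b-property (canonical compression base). -/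
noncomputable def sBProperty : Prop :=
  ∀ a : E, ∃ B : Set E, sBooleanSub B ∧
    ∀ p : E, Sharp p → (a ∈ sC p ↔ ∀ b ∈ B, b ∈ sC p)

/-- `aCb` (canonical compression base). -/
noncomputable def sCommuteC (a b : E) : Prop :=
  ∀ p ∈ sPbicomm a, ∀ q ∈ sPbicomm b, MCompat p q

variable (E) in
/-- The b-comparability property (canonical compression base). -/
noncomputable def sBComparability : Prop :=
  sBProperty E ∧
  ∀ e f : E, sCommuteC e f → ∃ p : E, p ∈ sPbicomm e ∧ p ∈ sPbicomm f ∧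
    le (SEA.seq p e) (SEA.seq p f) ∧
    le (SEA.seq (perp p) f) (SEA.seq (perp p) e)

variable (E) in
/-- Spectrality of a SEA with respect to its canonical compression base. -/
noncomputable def sSpectral : Prop := sProjCoverProp E ∧ sBComparability E

/-- `p` is the floor of `a` (canonical compression base). -/
noncomputable def sIsFloor (a p : E) : Prop :=
  Sharp p ∧ le p a ∧ ∀ q : E, Sharp q → le q a → le q p

variable (E) in
/-- Property A. -/
def PropertyA : Prop :=
  ∀ (f : ℕ → E) (a b : E), (∀ n, le (f n) (f (n + 1))) →
    (∀ m n, Commutes (f m) (f n)) → IsSupSeq f a →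
    (∀ n, Commutes (f n) b) → Commutes a b

variable (E) in
/-- A σ-SEA. -/
def SigmaSEA : Prop :=
  MonotoneSigmaComplete E ∧
  ∀ (f : ℕ → E) (m : E), (∀ n, le (f (n + 1)) (f n)) → IsInfSeq f m →
    ∀ b : E, IsInfSeq (fun n => SEA.seq b (f n)) (SEA.seq b m) ∧
      ((∀ n, Commutes b (f n)) → Commutes b m)

/-- Iterated sequential powers: `seqPow a n = a^(n+1)`. -/
def seqPow (a : E) : ℕ → E
  | 0 => a
  | n + 1 => SEA.seq a (seqPow a n)

end SEAdefs

end EffectAlgebra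

open EffectAlgebra in
/-- A convex effect algebra: scalar multiplication by reals in `[0,1]`. -/
class ConvexEA (E : Type u) [EffectAlgebra E] where
  smul : ℝ → E → E
  smul_smul : ∀ (l m : ℝ) (a : E), 0 ≤ l → l ≤ 1 → 0 ≤ m → m ≤ 1 →
    smul m (smul l a) = smul (l * m) a
  smul_add_coeff : ∀ (l m : ℝ) (a : E), 0 ≤ l → 0 ≤ m → l + m ≤ 1 →
    oplus (smul l a) (smul m a) = some (smul (l + m) a)
  smul_oplus : ∀ (l : ℝ) (a b c : E), 0 ≤ l → l ≤ 1 → oplus a b = some c →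
    oplus (smul l a) (smul l b) = some (smul l c)
  one_smul : ∀ a : E, smul 1 a = a

namespace EffectAlgebra

variable {E : Type u} [EffectAlgebra E]

section Convexdefs

variable [ConvexEA E]

variable (E) in
/-- Strong archimedeanity. -/
def StronglyArchimedean : Prop :=
  ∀ a b c : E,
    (∀ n : ℕ, ∃ d : E, oplus b (ConvexEA.smul (1 / (n + 1) : ℝ) c) = some d ∧ le a d) →
    le a b

/-- `DistLE a b ε` encodes `‖a - b‖ ≤ ε` in the order unit norm:
`(1/2)a ≤ (1/2)b ⊕ (ε/2)1` and symmetrically (with `ε` clamped to `[0,1]`). -/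
def DistLE (a b : E) (ε : ℝ) : Prop :=
  (∃ d : E, oplus (ConvexEA.smul (2⁻¹ : ℝ) b) (ConvexEA.smul (min ε 1 / 2) one) = some d ∧
    le (ConvexEA.smul (2⁻¹ : ℝ) a) d) ∧
  (∃ d : E, oplus (ConvexEA.smul (2⁻¹ : ℝ) a) (ConvexEA.smul (min ε 1 / 2) one) = some d ∧
    le (ConvexEA.smul (2⁻¹ : ℝ) b) d)

/-- Norm convergence of a sequence. -/
def NormLimit (f : ℕ → E) (a : E) : Prop :=
  ∀ ε : ℝ, 0 < ε → ∃ N : ℕ, ∀ n ≥ N, DistLE (f n) a ε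

/-- Cauchy sequences with respect to the order unit norm. -/
def CauchySeqE (f : ℕ → E) : Prop :=
  ∀ ε : ℝ, 0 < ε → ∃ N : ℕ, ∀ m ≥ N, ∀ n ≥ N, DistLE (f m) (f n) ε

variable (E) in
/-- Norm completeness. -/
def NormComplete : Prop := ∀ f : ℕ → E, CauchySeqE f → ∃ a : E, NormLimit f a

/-- A norm-closed subset. -/
def NormClosedSet (S : Set E) : Prop :=
  ∀ (f : ℕ → E) (a : E), (∀ n, f n ∈ S) → NormLimit f a → a ∈ S

/-- A norm-complete subset. -/
def NormCompleteSet (S : Set E) : Prop :=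
  ∀ f : ℕ → E, (∀ n, f n ∈ S) → CauchySeqE f → ∃ a ∈ S, NormLimit f a

/-- One-dimensional elements. -/
def OneDim (a : E) : Prop :=
  ∀ b : E, le b a → ∃ t : ℝ, 0 ≤ t ∧ t ≤ 1 ∧ b = ConvexEA.smul t a

/-- `l` is a representation of `a` as a simple element:
`a = ⊕ μ_i p_i` with `μ_i ∈ [0,1]`, `p_i` sharp and `⊕ p_i = 1`. -/
noncomputable def SimpleRep (a : E) (l : List (ℝ × E)) : Prop :=
  (∀ x ∈ l, x.1 ∈ Set.Icc (0 : ℝ) 1 ∧ Sharp x.2) ∧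
  osum (l.map Prod.snd) = some one ∧
  osum (l.map fun x => ConvexEA.smul x.1 x.2) = some a

/-- Simple elements. -/
noncomputable def SimpleElem (a : E) : Prop := ∃ l : List (ℝ × E), SimpleRep a l

/-- A reduced representation: strictly increasing coefficients, nonzero sharp elements. -/
noncomputable def ReducedRep (a : E) (l : List (ℝ × E)) : Prop :=
  SimpleRep a l ∧ (l.map Prod.fst).Chain' (· < ·) ∧ ∀ x ∈ l, x.2 ≠ zero

end Convexdefs

section SpecRes

variable [SEA E] [ConvexEA E]

/-- `p` is the spectral resolution of `a` (canonical compression base): a family of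
projections in the bicommutant of `a`, nondecreasing and right continuous on `[0,1]`,
with `J_{p_λ}(a) ≤ λ p_λ` and `λ p_λ^⊥ ≤ J_{p_λ^⊥}(a)`. -/
noncomputable def sIsSpecRes (a : E) (p : ℝ → E) : Prop :=
  (∀ l : ℝ, 0 ≤ l → l ≤ 1 → p l ∈ sPbicomm a) ∧
  (∀ l m : ℝ, 0 ≤ l → l ≤ m → m ≤ 1 → le (p l) (p m)) ∧
  (∀ l : ℝ, 0 ≤ l → l < 1 →
    IsInfSet {x : E | ∃ m : ℝ, l < m ∧ m ≤ 1 ∧ x = p m} (p l)) ∧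
  (∀ l : ℝ, 0 ≤ l → l ≤ 1 →
    le (SEA.seq (p l) a) (ConvexEA.smul l (p l)) ∧
    le (ConvexEA.smul l (perp (p l))) (SEA.seq (perp (p l)) a))

end SpecRes

end EffectAlgebra

namespace CompressionBase

open EffectAlgebra

variable {E : Type u} [EffectAlgebra E] [ConvexEA E] (cb : CompressionBase E)

/-- `p` is the spectral resolution of `a` with respect to the compression base `cb`. -/
noncomputable def IsSpecRes (a : E) (p : ℝ → E) : Prop :=
  (∀ l : ℝ, 0 ≤ l → l ≤ 1 → p l ∈ cb.Pbicomm a) ∧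
  (∀ l m : ℝ, 0 ≤ l → l ≤ m → m ≤ 1 → le (p l) (p m)) ∧
  (∀ l : ℝ, 0 ≤ l → l < 1 →
    IsInfSet {x : E | ∃ m : ℝ, l < m ∧ m ≤ 1 ∧ x = p m} (p l)) ∧
  (∀ l : ℝ, 0 ≤ l → l ≤ 1 →
    le (cb.J (p l) a) (ConvexEA.smul l (p l)) ∧
    le (ConvexEA.smul l (perp (p l))) (cb.J (perp (p l)) a))

end CompressionBase

/-!
Pass to a subsequence with `‖f (N n) - a‖ ≤ 2⁻⁽ⁿ⁺³⁾` and shift it at scale `¼`: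
`g n = ¼ f (N n) ⊕ (¼ - 2⁻⁽ⁿ⁺³⁾)·1`. The shifts are dyadic multiples of `1`, hence central, so the
`g n` commute with each other and with `S`. The shifts increase by more than the approximation
errors, so `(g n)` is ascending, and strong archimedeanity makes `¼ a ⊕ ¼·1` its supremum.
Property A then gives `(¼ a ⊕ ¼·1) | s` for `s ∈ S`, and stripping the central summand and the
factor `¼` yields `a | s`.
-/

open Filter Topology
open ConvexEA (smul)

namespace EffectAlgebra

variable {E : Type u} [EffectAlgebra E] {a b c x y z : E}

section Basic

theorem oplus_perp (a : E) : oplus a (perp a) = some one :=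
  Classical.choose_spec (exists_perp a)

theorem perp_eq_of_oplus_eq_one (h : oplus a b = some one) : perp a = b :=
  perp_unique (oplus_perp a) h

theorem perp_perp (a : E) : perp (perp a) = a :=
  perp_eq_of_oplus_eq_one (by rw [oplus_comm]; exact oplus_perp a)

theorem one_oplus_zero : oplus (one : E) zero = some one := by
  obtain ⟨b, hb⟩ := exists_perp (one : E)
  rwa [oplus_one (show oplus b one = some one by rwa [oplus_comm])] at hb

theorem oplus_zero (a : E) : oplus a zero = some a := by
  have h : oplus (perp a) a = some one := by rw [oplus_comm]; exact oplus_perp a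
  obtain ⟨a', ha', h'⟩ := oplus_assoc h one_oplus_zero
  rwa [perp_unique h' h] at ha'

theorem oplus_assoc_symm {bc abc : E} (hbc : oplus b c = some bc) (habc : oplus a bc = some abc) :
    ∃ ab, oplus a b = some ab ∧ oplus ab c = some abc := by
  rw [oplus_comm] at hbc habc
  obtain ⟨ba, hba, hcba⟩ := oplus_assoc hbc habc
  rw [oplus_comm] at hba hcba
  exact ⟨ba, hba, hcba⟩

theorem oplus_assoc_eq {ab bc abc : E} (hab : oplus a b = some ab)
    (habc : oplus ab c = some abc) (hbc : oplus b c = some bc) : oplus a bc = some abc := by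
  obtain ⟨bc', hbc', h⟩ := oplus_assoc hab habc
  rwa [Option.some.inj (hbc'.symm.trans hbc)] at h

theorem oplus_assoc_symm_eq {ab bc abc : E} (hbc : oplus b c = some bc)
    (habc : oplus a bc = some abc) (hab : oplus a b = some ab) : oplus ab c = some abc := by
  obtain ⟨ab', hab', h⟩ := oplus_assoc_symm hbc habc
  rwa [Option.some.inj (hab'.symm.trans hab)] at h

theorem oplus_oplus_oplus_comm {p q r m pp qq : E} (hr : oplus p q = some r)
    (hm : oplus r r = some m) (hpp : oplus p p = some pp) (hqq : oplus q q = some qq) :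
    oplus pp qq = some m := by
  obtain ⟨e, he, hpe⟩ := oplus_assoc hr hm
  rw [oplus_comm] at hr
  have hqqp : oplus qq p = some e := oplus_assoc_symm_eq hr he hqq
  rw [oplus_comm] at hqqp
  exact oplus_assoc_symm_eq hqqp hpe hpp

theorem le.refl (a : E) : le a a := ⟨zero, oplus_zero a⟩

theorem le_one (a : E) : le a one := ⟨perp a, oplus_perp a⟩

theorem le.trans (hab : le a b) (hbc : le b c) : le a c := by
  obtain ⟨x, hx⟩ := hab
  obtain ⟨y, hy⟩ := hbc
  obtain ⟨e, -, he⟩ := oplus_assoc hx hy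
  exact ⟨e, he⟩

theorem le_of_oplus_eq_right (h : oplus a b = some c) : le b c :=
  ⟨a, by rwa [oplus_comm]⟩

theorem exists_oplus_le_of_le {a' w : E} (h : le a a') (hw : oplus a' z = some w) :
    ∃ v, oplus a z = some v ∧ le v w := by
  obtain ⟨c, hc⟩ := h
  obtain ⟨e, he, hae⟩ := oplus_assoc hc hw
  rw [oplus_comm] at he
  obtain ⟨v, hv, hvc⟩ := oplus_assoc_symm he hae
  exact ⟨v, hv, c, hvc⟩

theorem exists_oplus_le_oplus {a' b' t : E} (ha : le a a') (hb : le b b')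
    (ht : oplus a' b' = some t) : ∃ s, oplus a b = some s ∧ le s t := by
  obtain ⟨t₁, ht₁, ht₁t⟩ := exists_oplus_le_of_le ha ht
  rw [oplus_comm] at ht₁
  obtain ⟨s, hs, hst₁⟩ := exists_oplus_le_of_le hb ht₁
  rw [oplus_comm] at hs
  exact ⟨s, hs, hst₁.trans ht₁t⟩

theorem oplus_le_oplus {a' b' s t : E} (ha : le a a') (hb : le b b')
    (hs : oplus a b = some s) (ht : oplus a' b' = some t) : le s t := by
  obtain ⟨s', hs', hs't⟩ := exists_oplus_le_oplus ha hb ht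
  rwa [Option.some.inj (hs.symm.trans hs')]

end Basic

section SEA

variable [SEA E]

theorem Commutes.symm (h : Commutes a b) : Commutes b a := Eq.symm h

theorem commutes_one (a : E) : Commutes a one :=
  SEA.comm_oplus a (perp a) a one rfl (SEA.comm_perp a a rfl) (oplus_perp a)

theorem seq_one (a : E) : SEA.seq a one = a :=
  (commutes_one a).trans (SEA.one_seq a)

def IsCentral (z : E) : Prop := ∀ y, Commutes y z

theorem isCentral_one : IsCentral (one : E) := commutes_one

theorem IsCentral.oplus {w v : E} (hz : IsCentral z) (hw : IsCentral w)
    (h : oplus z w = some v) : IsCentral v :=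
  fun y => SEA.comm_oplus _ _ _ _ (hz y) (hw y) h

theorem Commutes.of_oplus_central (hz : IsCentral z) (h : oplus a z = some b)
    (hb : Commutes y b) : Commutes y a := by
  obtain ⟨w, hw, haw⟩ := oplus_assoc h (oplus_perp b)
  have hyw : Commutes y w := SEA.comm_oplus _ _ _ _ (hz y) (SEA.comm_perp y b hb) hw
  rw [oplus_comm] at haw
  have h := SEA.comm_perp y w hyw
  rwa [perp_eq_of_oplus_eq_one haw] at h

end SEA

section Convex

variable [ConvexEA E]

theorem half_oplus_half (x : E) : oplus (smul 2⁻¹ x) (smul 2⁻¹ x) = some x := by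
  have h := ConvexEA.smul_add_coeff (2⁻¹ : ℝ) 2⁻¹ x (by norm_num) (by norm_num) (by norm_num)
  rwa [show (2⁻¹ : ℝ) + 2⁻¹ = 1 by norm_num, ConvexEA.one_smul] at h

theorem eq_half_of_oplus_self (h : oplus x x = some y) : x = smul 2⁻¹ y := by
  have h2 := ConvexEA.smul_oplus (2⁻¹ : ℝ) x x y (by norm_num) (by norm_num) h
  rw [half_oplus_half x] at h2
  exact Option.some.inj h2

theorem half_smul_half (x : E) : smul 2⁻¹ (smul 2⁻¹ x) = smul 4⁻¹ x := by
  rw [ConvexEA.smul_smul _ _ x (by norm_num) (by norm_num) (by norm_num) (by norm_num)]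
  norm_num

theorem smul_le_smul {l : ℝ} (hl0 : 0 ≤ l) (hl1 : l ≤ 1) (h : le x y) :
    le (smul l x) (smul l y) := by
  obtain ⟨c, hc⟩ := h
  exact ⟨smul l c, ConvexEA.smul_oplus l x c y hl0 hl1 hc⟩

theorem smul_le_smul_of_le {l m : ℝ} (x : E) (hl : 0 ≤ l) (hlm : l ≤ m) (hm : m ≤ 1) :
    le (smul l x) (smul m x) := by
  have h := ConvexEA.smul_add_coeff l (m - l) x hl (by linarith) (by linarith)
  rw [add_sub_cancel] at h
  exact ⟨_, h⟩

theorem smul_le_smul_one {l : ℝ} (x : E) (hl0 : 0 ≤ l) (hl1 : l ≤ 1) :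
    le (smul l x) (smul l one) :=
  smul_le_smul hl0 hl1 (le_one x)

theorem exists_oplus_smul_one_le {p ν : ℝ} (hy : le y (smul p one)) (hp : 0 ≤ p) (hν : 0 ≤ ν)
    (h1 : p + ν ≤ 1) : ∃ w, oplus y (smul ν one) = some w ∧ le w (smul (p + ν) one) :=
  exists_oplus_le_oplus hy (le.refl _) (ConvexEA.smul_add_coeff p ν one hp hν h1)

theorem exists_oplus_quarter_smul_one (x : E) {c : ℝ} (h0 : 0 ≤ c) (h1 : c ≤ 3 / 4) :
    ∃ g, oplus (smul 4⁻¹ x) (smul c one) = some g :=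
  (exists_oplus_smul_one_le (smul_le_smul_one x (by norm_num) (by norm_num)) (by norm_num) h0
    (by linarith)).imp fun _ h => h.1

theorem le_of_half_le_half (h : le (smul 2⁻¹ x) (smul 2⁻¹ y)) : le x y := by
  obtain ⟨t, ht⟩ := h
  have ht1 : le t (smul 2⁻¹ one) :=
    (le_of_oplus_eq_right ht).trans (smul_le_smul_one y (by norm_num) (by norm_num))
  obtain ⟨t₂, ht₂, -⟩ := exists_oplus_le_oplus ht1 ht1 (half_oplus_half one)
  rw [eq_half_of_oplus_self ht₂] at ht
  exact ⟨t₂, oplus_oplus_oplus_comm ht (half_oplus_half y) (half_oplus_half x)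
    (half_oplus_half t₂)⟩

def LeOplusSmulOne (x y : E) (μ : ℝ) : Prop :=
  ∃ d, oplus y (smul μ one) = some d ∧ le x d

namespace LeOplusSmulOne

variable {μ ν p : ℝ}

theorem of_oplus (h : oplus x (smul μ one) = some y) : LeOplusSmulOne y x μ :=
  ⟨y, h, le.refl y⟩

theorem le_of_oplus {γ : ℝ} (h : LeOplusSmulOne x y μ) (hμ : 0 ≤ μ) (hμγ : μ ≤ γ) (hγ : γ ≤ 1)
    (hz : oplus y (smul γ one) = some z) : le x z := by
  obtain ⟨d, hd, hxd⟩ := h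
  exact hxd.trans (oplus_le_oplus (le.refl y) (smul_le_smul_of_le one hμ hμγ hγ) hd hz)

theorem mono (h : LeOplusSmulOne x y μ) (hyz : le y z) (hz : le z (smul p one)) (hμ : 0 ≤ μ)
    (hμν : μ ≤ ν) (hp : 0 ≤ p) (h1 : p + ν ≤ 1) : LeOplusSmulOne x z ν := by
  obtain ⟨d, hd, hxd⟩ := h
  obtain ⟨e, he, -⟩ := exists_oplus_smul_one_le hz hp (hμ.trans hμν) h1
  exact ⟨e, he, hxd.trans
    (oplus_le_oplus hyz (smul_le_smul_of_le one hμ hμν (by linarith)) hd he)⟩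

theorem trans (hxy : LeOplusSmulOne x y μ) (hyz : LeOplusSmulOne y z ν)
    (hz : le z (smul p one)) (hμ : 0 ≤ μ) (hν : 0 ≤ ν) (hp : 0 ≤ p) (h1 : p + (ν + μ) ≤ 1) :
    LeOplusSmulOne x z (ν + μ) := by
  obtain ⟨d, hd, hxd⟩ := hxy
  obtain ⟨e, he, hye⟩ := hyz
  obtain ⟨e', he', he'le⟩ := exists_oplus_smul_one_le hz hp hν (by linarith)
  obtain rfl : e' = e := Option.some.inj (he'.symm.trans he)
  obtain ⟨w, hw, -⟩ := exists_oplus_smul_one_le he'le (by linarith) hμ (by linarith)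
  exact ⟨w, oplus_assoc_eq he hw (ConvexEA.smul_add_coeff ν μ one hν hμ (by linarith)),
    hxd.trans (oplus_le_oplus hye (le.refl _) hd hw)⟩

theorem half (h : LeOplusSmulOne x y μ) (h0 : 0 ≤ μ) (h1 : μ ≤ 1) :
    LeOplusSmulOne (smul 2⁻¹ x) (smul 2⁻¹ y) (μ / 2) := by
  obtain ⟨d, hd, hxd⟩ := h
  have h2 := ConvexEA.smul_oplus (2⁻¹ : ℝ) _ _ d (by norm_num) (by norm_num) hd
  rw [ConvexEA.smul_smul μ 2⁻¹ one h0 h1 (by norm_num) (by norm_num), ← div_eq_mul_inv] at h2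
  exact ⟨_, h2, smul_le_smul (by norm_num) (by norm_num) hxd⟩

end LeOplusSmulOne

theorem DistLE.quarter {ε : ℝ} (h : DistLE x y ε) (h0 : 0 ≤ ε) (h1 : ε ≤ 1) :
    LeOplusSmulOne (smul 4⁻¹ x) (smul 4⁻¹ y) (ε / 4) ∧
      LeOplusSmulOne (smul 4⁻¹ y) (smul 4⁻¹ x) (ε / 4) := by
  have key : ∀ {u v : E}, LeOplusSmulOne (smul 2⁻¹ u) (smul 2⁻¹ v) (min ε 1 / 2) →
      LeOplusSmulOne (smul 4⁻¹ u) (smul 4⁻¹ v) (ε / 4) := by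
    intro u v huv
    rw [min_eq_left h1] at huv
    have h2 := huv.half (by linarith) (by linarith)
    rwa [half_smul_half, half_smul_half, div_div, show (2 : ℝ) * 2 = 4 by norm_num] at h2
  exact ⟨key h.1, key h.2⟩

theorem isSupSeq_of_leOplusSmulOne (harch : StronglyArchimedean E) {g : ℕ → E} {ε : ℕ → ℝ}
    (hε0 : ∀ n, 0 ≤ ε n) (hε : Tendsto ε atTop (𝓝 0)) (hle : ∀ n, le (g n) x)
    (happrox : ∀ n, LeOplusSmulOne x (g n) (ε n)) : IsSupSeq g x := by
  refine ⟨hle, fun b hb => le_of_half_le_half (harch _ _ (smul 2⁻¹ one) fun m => ?_)⟩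
  have hm0 : (0 : ℝ) < 1 / (m + 1) := by positivity
  have hm1 : 1 / ((m : ℝ) + 1) ≤ 1 := by
    rw [div_le_one (by positivity)]
    linarith [m.cast_nonneg (α := ℝ)]
  obtain ⟨n, hn⟩ := (hε.eventually (gt_mem_nhds hm0)).exists
  rw [ConvexEA.smul_smul _ _ _ (by norm_num) (by norm_num) hm0.le hm1]
  exact ((happrox n).half (hε0 n) (by linarith)).mono
    (smul_le_smul (by norm_num) (by norm_num) (hb n))
    (smul_le_smul_one b (by norm_num) (by norm_num)) (by linarith [hε0 n]) (by linarith)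
    (by norm_num) (by linarith)

end Convex

section QuarterShift

variable [ConvexEA E] {ε : ℝ}

theorem leOplusSmulOne_quarter_shift (hε0 : 0 ≤ ε) (hε : ε ≤ 4⁻¹)
    (hxy : LeOplusSmulOne (smul 4⁻¹ x) (smul 4⁻¹ y) (ε / 4))
    (hg : oplus (smul 4⁻¹ x) (smul (4⁻¹ - ε) one) = some z) :
    LeOplusSmulOne z (smul 4⁻¹ y) (ε / 4 + (4⁻¹ - ε)) :=
  (LeOplusSmulOne.of_oplus hg).trans hxy (smul_le_smul_one y (by norm_num) (by norm_num))
    (by linarith) (by linarith) (by norm_num) (by linarith)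

theorem quarter_shift_le (hε0 : 0 ≤ ε) (hε : ε ≤ 4⁻¹)
    (hxy : LeOplusSmulOne (smul 4⁻¹ x) (smul 4⁻¹ y) (ε / 4))
    (hg : oplus (smul 4⁻¹ x) (smul (4⁻¹ - ε) one) = some z)
    (hb : oplus (smul 4⁻¹ y) (smul 4⁻¹ one) = some b) : le z b :=
  (leOplusSmulOne_quarter_shift hε0 hε hxy hg).le_of_oplus (by linarith) (by linarith)
    (by norm_num) hb

theorem quarter_shift_le_quarter_shift {x' z' : E} {ε' : ℝ} (hε' : 0 ≤ ε') (hε : ε ≤ 4⁻¹)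
    (hεε' : ε = 2 * ε') (hxy : LeOplusSmulOne (smul 4⁻¹ x) (smul 4⁻¹ y) (ε / 4))
    (hyx' : LeOplusSmulOne (smul 4⁻¹ y) (smul 4⁻¹ x') (ε' / 4))
    (hg : oplus (smul 4⁻¹ x) (smul (4⁻¹ - ε) one) = some z)
    (hg' : oplus (smul 4⁻¹ x') (smul (4⁻¹ - ε') one) = some z') : le z z' := by
  subst hεε'
  exact ((leOplusSmulOne_quarter_shift (by linarith) hε hxy hg).trans hyx'
    (smul_le_smul_one x' (by norm_num) (by norm_num)) (by linarith) (by linarith) (by norm_num)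
    (by linarith)).le_of_oplus (by linarith) (by linarith) (by linarith) hg'

theorem leOplusSmulOne_of_quarter_shift (hε0 : 0 ≤ ε) (hε : ε ≤ 4⁻¹)
    (hyx : LeOplusSmulOne (smul 4⁻¹ y) (smul 4⁻¹ x) (ε / 4))
    (hg : oplus (smul 4⁻¹ x) (smul (4⁻¹ - ε) one) = some z)
    (hb : oplus (smul 4⁻¹ y) (smul 4⁻¹ one) = some b) :
    LeOplusSmulOne b z (5 / 4 * ε) := by
  obtain ⟨d, hd, hbd⟩ := (LeOplusSmulOne.of_oplus hb).trans hyx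
    (smul_le_smul_one x (by norm_num) (by norm_num)) (by norm_num) (by linarith) (by norm_num)
    (by linarith)
  rw [show ε / 4 + 4⁻¹ = (4⁻¹ - ε) + 5 / 4 * ε by ring] at hd
  exact ⟨d, oplus_assoc_symm_eq
    (ConvexEA.smul_add_coeff _ _ one (by linarith) (by linarith) (by linarith)) hd hg, hbd⟩

theorem exists_monotone_isSupSeq_quarter_shift (harch : StronglyArchimedean E) {x : ℕ → E}
    (hx : ∀ n, DistLE (x n) y ((2⁻¹ : ℝ) ^ (n + 3)))
    (hb : oplus (smul 4⁻¹ y) (smul 4⁻¹ one) = some b) :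
    ∃ g : ℕ → E, (∀ n, oplus (smul 4⁻¹ (x n)) (smul (4⁻¹ - (2⁻¹ : ℝ) ^ (n + 3)) one) = some (g n))
      ∧ (∀ n, le (g n) (g (n + 1))) ∧ IsSupSeq g b := by
  have hε0 : ∀ n : ℕ, 0 ≤ (2⁻¹ : ℝ) ^ (n + 3) := fun n => by positivity
  have hε : ∀ n : ℕ, (2⁻¹ : ℝ) ^ (n + 3) ≤ 8⁻¹ := fun n =>
    (pow_le_pow_of_le_one (by norm_num) (by norm_num) (by omega : 3 ≤ n + 3)).trans_eq
      (by norm_num)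
  have hq := fun n => (hx n).quarter (hε0 n) ((hε n).trans (by norm_num))
  choose g hg using fun n => exists_oplus_quarter_smul_one (x n) (c := 4⁻¹ - (2⁻¹ : ℝ) ^ (n + 3))
    (sub_nonneg.2 ((hε n).trans (by norm_num))) (by linarith [hε0 n])
  refine ⟨g, hg, fun n => quarter_shift_le_quarter_shift (hε0 (n + 1))
    ((hε n).trans (by norm_num)) (by ring) (hq n).1 (hq (n + 1)).2 (hg n) (hg (n + 1)), ?_⟩
  have hlim : Tendsto (fun n : ℕ => 5 / 4 * (2⁻¹ : ℝ) ^ (n + 3)) atTop (𝓝 0) := by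
    simpa using ((tendsto_pow_atTop_nhds_zero_of_lt_one (by norm_num : (0 : ℝ) ≤ 2⁻¹)
      (by norm_num)).comp (tendsto_add_atTop_nat 3)).const_mul (5 / 4 : ℝ)
  exact isSupSeq_of_leOplusSmulOne harch (fun n => by positivity) hlim
    (fun n => quarter_shift_le (hε0 n) ((hε n).trans (by norm_num)) (hq n).1 (hg n) hb)
    (fun n => leOplusSmulOne_of_quarter_shift (hε0 n) ((hε n).trans (by norm_num)) (hq n).2
      (hg n) hb)

end QuarterShift

section Central

variable [SEA E] [ConvexEA E]

theorem isCentral_half_one : IsCentral (smul 2⁻¹ one : E) := by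
  -- `½y | y` because `y = ½y ⊕ ½y`; likewise `½y^⊥ | y^⊥`, and `½·1 = ½y ⊕ ½y^⊥`.
  have hhalf : ∀ u : E, Commutes (smul 2⁻¹ u) u := fun u =>
    SEA.comm_oplus _ _ _ _ rfl rfl (half_oplus_half u)
  intro y
  have hperp : Commutes (smul 2⁻¹ (perp y)) y := by
    have h := SEA.comm_perp _ _ (hhalf (perp y))
    rwa [perp_perp] at h
  exact SEA.comm_oplus _ _ _ _ (hhalf y).symm hperp.symm
    (ConvexEA.smul_oplus _ _ _ _ (by norm_num) (by norm_num) (oplus_perp y))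

theorem half_one_seq (x : E) : SEA.seq (smul 2⁻¹ one) x = smul 2⁻¹ x := by
  rw [← isCentral_half_one x,
    eq_half_of_oplus_self (SEA.seq_oplus x _ _ one (half_oplus_half one)), seq_one]

theorem Commutes.smul_half (h : Commutes y x) : Commutes y (smul 2⁻¹ x) := by
  have h' := SEA.comm_seq _ _ y (isCentral_half_one y) h
  rwa [half_one_seq] at h'

theorem Commutes.smul_quarter (h : Commutes y x) : Commutes y (smul 4⁻¹ x) := by
  rw [← half_smul_half]
  exact h.smul_half.smul_half

theorem Commutes.of_smul_half (h : Commutes y (smul 2⁻¹ x)) : Commutes y x :=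
  SEA.comm_oplus _ _ _ _ h h (half_oplus_half x)

theorem Commutes.of_smul_quarter (h : Commutes y (smul 4⁻¹ x)) : Commutes y x := by
  rw [← half_smul_half] at h
  exact h.of_smul_half.of_smul_half

theorem isCentral_smul_one_two_inv_pow (k : ℕ) : IsCentral (smul ((2⁻¹ : ℝ) ^ k) one : E) := by
  induction k with
  | zero => simpa only [pow_zero, ConvexEA.one_smul] using isCentral_one
  | succ k ih =>
    rw [pow_succ, ← ConvexEA.smul_smul _ _ _ (by positivity)
      (pow_le_one₀ (by norm_num) (by norm_num)) (by norm_num) (by norm_num)]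
    exact fun y => (ih y).smul_half

theorem isCentral_smul_one_quarter_sub (n : ℕ) :
    IsCentral (smul (4⁻¹ - (2⁻¹ : ℝ) ^ (n + 3)) one : E) := by
  induction n with
  | zero =>
    rw [show (4⁻¹ : ℝ) - (2⁻¹) ^ (0 + 3) = (2⁻¹) ^ 3 by norm_num]
    exact isCentral_smul_one_two_inv_pow 3
  | succ n ih =>
    have hle : (2⁻¹ : ℝ) ^ (n + 4) ≤ (2⁻¹) ^ (n + 3) :=
      pow_le_pow_of_le_one (by norm_num) (by norm_num) (by omega)
    have h8 : (2⁻¹ : ℝ) ^ (n + 3) ≤ (2⁻¹) ^ 3 :=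
      pow_le_pow_of_le_one (by norm_num) (by norm_num) (by omega)
    have hsum := ConvexEA.smul_add_coeff (4⁻¹ - (2⁻¹ : ℝ) ^ (n + 3)) ((2⁻¹) ^ (n + 4)) (one : E)
      (by norm_num at h8 ⊢; linarith) (by positivity) (by linarith)
    rw [show 4⁻¹ - (2⁻¹ : ℝ) ^ (n + 3) + (2⁻¹) ^ (n + 4) = 4⁻¹ - (2⁻¹) ^ (n + 1 + 3) by ring]
      at hsum
    exact ih.oplus (isCentral_smul_one_two_inv_pow _) hsum

end Central

end EffectAlgebra

open EffectAlgebra in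
/-- in a strongly archimedean convex SEA with property A, commutants are
closed under norm limits of sequences of mutually commuting elements. -/
theorem stmt8 {E : Type u} [EffectAlgebra E] [SEA E] [ConvexEA E]
    (harch : StronglyArchimedean E) (hA : PropertyA E) (S : Set E)
    (f : ℕ → E) (a : E) (hf : ∀ n, f n ∈ commutant S)
    (hcomm : ∀ m n, Commutes (f m) (f n)) (hlim : NormLimit f a) :
    a ∈ commutant S := by
  intro s hs
  choose N hN using fun n : ℕ => hlim ((2⁻¹ : ℝ) ^ (n + 3)) (by positivity)
  obtain ⟨b, hb⟩ := exists_oplus_quarter_smul_one a (c := 4⁻¹) (by norm_num) (by norm_num)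
  obtain ⟨g, hg, hg_mono, hg_sup⟩ :=
    exists_monotone_isSupSeq_quarter_shift harch (x := fun n => f (N n))
      (fun n => hN n (N n) le_rfl) hb
  have hg_comm : ∀ n y, Commutes y (f (N n)) → Commutes y (g n) := fun n y hy =>
    SEA.comm_oplus _ _ _ _ hy.smul_quarter (isCentral_smul_one_quarter_sub n y) (hg n)
  have hbs : Commutes b s := hA g b s hg_mono
    (fun m n => hg_comm n _ (hg_comm m _ (hcomm (N n) (N m))).symm) hg_sup
    (fun n => (hg_comm n s (hf (N n) s hs).symm).symm)
  have hquarter : IsCentral (smul 4⁻¹ one : E) := by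
    simpa only [show (2⁻¹ : ℝ) ^ 2 = 4⁻¹ by norm_num] using isCentral_smul_one_two_inv_pow 2
  exact (hbs.symm.of_oplus_central hquarter hb).of_smul_quarter.symm
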